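/- arXiv:2605.25648 — 2 statements merged into one kernel-verified Lean document; each statement's English description precedes it below -/
import Mathlib

section
/- Let K ≥ 1, let V be a nonempty set, and let E_1, …, E_K : V → ℝ be branch energy functions. For a source assignment s : {1,…,K} → V define the structural loss L(s) = Σ_{k=1}^K E_k(s_k). (i) If σ is a permutation of {1,…,K} with E_{σ(k)} = E_k for all k, then L(s ∘ σ) = L(s) for all s. (ii) Conversely, suppose the branch energies are pairwise structurally distinct in the sense that for every i ≠ j the difference E_i − E_j : V → ℝ is not a constant function. Then the only permutation σ of {1,…,K} satisfying Σ_{k=1}^K E_k(s_{σ(k)}) = Σ_{k=1}^K E_k(s_k) for all s : {1,…,K} → V is the identity permutation. -/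
/-- (i) permutations matching identical branch energies preserve
the structural loss `L(s) = ∑ k, E k (s k)`; (ii) if the branch energies are
pairwise structurally distinct (no difference `E i − E j` is constant), the
only structural-loss-preserving permutation is the identity. -/
theorem stmt2 {K : ℕ} (hK : 1 ≤ K) {V : Type*} [Nonempty V]
    (E : Fin K → V → ℝ) :
    (∀ σ : Equiv.Perm (Fin K), (∀ k, E (σ k) = E k) →
        ∀ s : Fin K → V, ∑ k, E k (s (σ k)) = ∑ k, E k (s k)) ∧
    ((∀ i j : Fin K, i ≠ j → ¬ ∃ c : ℝ, ∀ v : V, E i v - E j v = c) →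
        ∀ σ : Equiv.Perm (Fin K),
          (∀ s : Fin K → V, ∑ k, E k (s (σ k)) = ∑ k, E k (s k)) → σ = 1) := by
  constructor
  · intro σ hσ s
    calc ∑ k, E k (s (σ k)) = ∑ k, E (σ k) (s (σ k)) := by
          exact Finset.sum_congr rfl fun k _ => by rw [hσ k]
      _ = ∑ k, E k (s k) := Equiv.sum_comp σ (fun j => E j (s j))
  · intro hd σ hσ
    by_contra hne
    obtain ⟨k, hk⟩ : ∃ k, σ k ≠ k := by
      by_contra h; push_neg at h; exact hne (Equiv.ext h)
    obtain ⟨v0⟩ := ‹Nonempty V›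
    refine hd k (σ k) hk.symm ⟨(∑ i ∈ Finset.univ.erase (σ k), E i v0)
      - (∑ i ∈ Finset.univ.erase k, E i v0), fun v => ?_⟩
    have h := hσ (Function.update (fun _ => v0) (σ k) v)
    have L : ∑ i, E i (Function.update (fun _ => v0) (σ k) v (σ i))
        = E k v + ∑ i ∈ Finset.univ.erase k, E i v0 := by
      rw [← Finset.add_sum_erase _ _ (Finset.mem_univ k)]
      congr 1
      · simp
      · refine Finset.sum_congr rfl fun i hi => ?_
        rw [Function.update_of_ne]
        exact fun h' => (Finset.mem_erase.mp hi).1 (σ.injective h')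
    have R : ∑ i, E i (Function.update (fun _ => v0) (σ k) v i)
        = E (σ k) v + ∑ i ∈ Finset.univ.erase (σ k), E i v0 := by
      rw [← Finset.add_sum_erase _ _ (Finset.mem_univ (σ k))]
      congr 1
      · simp
      · refine Finset.sum_congr rfl fun i hi => ?_
        rw [Function.update_of_ne (Finset.mem_erase.mp hi).1]
    rw [L, R] at h
    linarith
end

section
/- Let K ≥ 1, let F be a finite index set (the lag set), and for each τ ∈ F let Γ(τ) be a real K × K diagonal matrix whose k-th diagonal entry is γ_k(τ). Suppose there exist real coefficients β_τ, τ ∈ F, such that the numbers λ_k = Σ_{τ∈F} β_τ γ_k(τ), k = 1,…,K, are pairwise distinct (the simple temporal contrast assumption). Let Q be a real K × K orthogonal matrix such that Qᵀ Γ(τ) Q is diagonal for every τ ∈ F. Then Q is a signed permutation matrix: there exist a permutation σ of {1,…,K} and signs ε_1, …, ε_K ∈ {−1, +1} such that the (i,j) entry of Q equals ε_j when i = σ(j) and equals 0 otherwise. -/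
/-!
Put `λ = ∑ τ, β τ • γ τ`. Joint diagonalization is linear in the diagonal, so `Qᵀ diag(λ) Q` is
diagonal too, say `diag(μ)`; as `Q` is orthogonal this reads `diag(λ) Q = Q diag(μ)`, i.e.
`λ i * Q i j = Q i j * μ j`. Hence `Q i j ≠ 0` forces `λ i = μ j`, and because the entries of `λ`
are distinct every column of `Q` has at most one nonzero entry. Orthonormality of the columns
then makes that entry `±1` and the rows carrying them pairwise distinct.
-/

open Matrix

namespace Matrix

variable {ι m n R : Type*}

theorem isDiag_sum [AddCommMonoid R] {s : Finset ι} {A : ι → Matrix n n R}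
    (h : ∀ τ ∈ s, (A τ).IsDiag) : (∑ τ ∈ s, A τ).IsDiag := by
  intro i j hij
  rw [sum_apply]
  exact Finset.sum_eq_zero fun τ hτ => h τ hτ hij

variable [Fintype n] [DecidableEq n]

theorem isDiag_transpose_mul_diagonal_sum_smul_mul [CommSemiring R] {s : Finset ι}
    (Q : Matrix n n R) (β : ι → R) {γ : ι → n → R}
    (h : ∀ τ ∈ s, (Qᵀ * diagonal (γ τ) * Q).IsDiag) :
    (Qᵀ * diagonal (∑ τ ∈ s, β τ • γ τ) * Q).IsDiag := by
  have hlin : Qᵀ * diagonal (∑ τ ∈ s, β τ • γ τ) * Q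
      = ∑ τ ∈ s, β τ • (Qᵀ * diagonal (γ τ) * Q) := by
    have hsum : diagonal (∑ τ ∈ s, β τ • γ τ) = ∑ τ ∈ s, β τ • diagonal (γ τ) :=
      (map_sum (diagonalLinearMap n R R) _ s).trans (by simp)
    simp only [hsum, Finset.mul_sum, Finset.sum_mul, mul_smul_comm, smul_mul_assoc]
  rw [hlin]
  exact isDiag_sum fun τ hτ => (h τ hτ).smul (β τ)

theorem eq_of_diagonal_mul_eq_mul_diagonal [CommRing R] [NoZeroDivisors R] [Fintype m]
    [DecidableEq m] {Q : Matrix m n R} {d : m → R} {e : n → R}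
    (h : diagonal d * Q = Q * diagonal e) {i : m} {j : n} (hij : Q i j ≠ 0) : d i = e j := by
  have hentry := congrFun (congrFun h i) j
  rw [diagonal_mul, mul_diagonal] at hentry
  exact mul_right_cancel₀ hij (hentry.trans (mul_comm _ _))

variable [CommRing R] [IsDomain R]

theorem exists_signed_perm_of_transpose_mul_self_eq_one {Q : Matrix n n R} (hQ : Qᵀ * Q = 1)
    (hcol : ∀ j i i', Q i j ≠ 0 → Q i' j ≠ 0 → i = i') :
    ∃ (σ : Equiv.Perm n) (ε : n → R),
      (∀ j, ε j = 1 ∨ ε j = -1) ∧ ∀ i j, Q i j = if i = σ j then ε j else 0 := by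
  have hinner (j j' : n) : ∑ i, Q i j * Q i j' = (1 : Matrix n n R) j j' := by
    rw [← hQ, mul_apply]
    rfl
  have hnonzero (j : n) : ∃ i, Q i j ≠ 0 := by
    by_contra! h
    simpa [h] using hinner j j
  choose f hf using hnonzero
  have hcollapse (j : n) (v : n → R) : ∑ i, Q i j * v i = Q (f j) j * v (f j) :=
    Fintype.sum_eq_single _ fun i hi => by
      rw [not_ne_iff.mp (mt (hcol j i (f j) · (hf j)) hi), zero_mul]
  have hinj : f.Injective := by
    intro j j' hjj'
    by_contra hne
    have horth := hinner j j'
    rw [hcollapse, one_apply_ne hne, hjj'] at horth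
    exact mul_ne_zero (hjj' ▸ hf j) (hf j') horth
  refine ⟨Equiv.ofBijective f hinj.bijective_of_finite, fun j => Q (f j) j,
    fun j => mul_self_eq_one_iff.mp ?_, fun i j => ?_⟩
  · simpa [hcollapse] using hinner j j
  · rw [Equiv.ofBijective_apply]
    split_ifs with h
    · rw [h]
    · by_contra h0
      exact h (hcol j i (f j) h0 (hf j))

theorem exists_signed_perm_of_isDiag_transpose_mul_diagonal_mul {Q : Matrix n n R}
    {d : n → R} (hQ : Qᵀ * Q = 1) (hd : d.Injective) (hD : (Qᵀ * diagonal d * Q).IsDiag) :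
    ∃ (σ : Equiv.Perm n) (ε : n → R),
      (∀ j, ε j = 1 ∨ ε j = -1) ∧ ∀ i j, Q i j = if i = σ j then ε j else 0 := by
  have hintertwine : diagonal d * Q = Q * diagonal (Qᵀ * diagonal d * Q).diag := by
    rw [hD.diagonal_diag, ← Matrix.mul_assoc, ← Matrix.mul_assoc, mul_eq_one_comm.mp hQ,
      Matrix.one_mul]
  exact exists_signed_perm_of_transpose_mul_self_eq_one hQ fun j i i' hi hi' =>
    hd ((eq_of_diagonal_mul_eq_mul_diagonal hintertwine hi).trans
      (eq_of_diagonal_mul_eq_mul_diagonal hintertwine hi').symm)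

end Matrix

theorem stmt4_general {K : ℕ} {ι : Type*} [Fintype ι]
    (γ : ι → Fin K → ℝ) (β : ι → ℝ)
    (hcontrast : ∀ i j : Fin K, i ≠ j →
      (∑ τ, β τ * γ τ i) ≠ (∑ τ, β τ * γ τ j))
    (Q : Matrix (Fin K) (Fin K) ℝ)
    (hQ : Qᵀ * Q = 1)
    (hdiag : ∀ τ : ι, (Qᵀ * Matrix.diagonal (γ τ) * Q).IsDiag) :
    ∃ (σ : Equiv.Perm (Fin K)) (ε : Fin K → ℝ),
      (∀ j, ε j = 1 ∨ ε j = -1) ∧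
      ∀ i j, Q i j = if i = σ j then ε j else 0 := by
  have hlam : (∑ τ, β τ • γ τ) = fun k => ∑ τ, β τ * γ τ k := by
    ext k
    simp [Finset.sum_apply]
  have hinj : (∑ τ, β τ • γ τ).Injective := by
    rw [hlam]
    exact fun i j hij => by_contra fun hne => hcontrast i j hne hij
  exact exists_signed_perm_of_isDiag_transpose_mul_diagonal_mul hQ hinj
    (isDiag_transpose_mul_diagonal_sum_smul_mul Q β fun τ _ => hdiag τ)

/-- joint diagonalization of the lagged autocovariance matrices
under the simple temporal contrast assumption forces the orthogonal
ambiguity `Q` to be a signed permutation matrix. -/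
theorem stmt4 {K : ℕ} (hK : 1 ≤ K) {ι : Type*} [Fintype ι]
    (γ : ι → Fin K → ℝ) (β : ι → ℝ)
    (hcontrast : ∀ i j : Fin K, i ≠ j →
      (∑ τ, β τ * γ τ i) ≠ (∑ τ, β τ * γ τ j))
    (Q : Matrix (Fin K) (Fin K) ℝ)
    (hQ : Qᵀ * Q = 1)
    (hdiag : ∀ τ : ι, (Qᵀ * Matrix.diagonal (γ τ) * Q).IsDiag) :
    ∃ (σ : Equiv.Perm (Fin K)) (ε : Fin K → ℝ),
      (∀ j, ε j = 1 ∨ ε j = -1) ∧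
      ∀ i j, Q i j = if i = σ j then ε j else 0 :=
  stmt4_general γ β hcontrast Q hQ hdiag
end
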